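/- The recession cone of the copositive Ryshkov polyhedron R_COP = { B ∈ S^n : vᵀBv ≥ 1 for all v ∈ ℤ₊ⁿ \ {0} } equals the copositive cone COP^n; that is, R ∈ S^n satisfies Q + λR ∈ R_COP for all Q ∈ R_COP and all λ ≥ 0 if and only if xᵀRx ≥ 0 for all x ∈ ℝ₊ⁿ. -/

import Mathlib

open Matrix

/-- The quadratic form `x ↦ xᵀ B x`. -/
def qf {n : ℕ} (B : Matrix (Fin n) (Fin n) ℝ) (x : Fin n → ℝ) : ℝ := x ⬝ᵥ B.mulVec x

/-- Coercion of an integer vector to a real vector. -/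
def intCast {n : ℕ} (v : Fin n → ℤ) : Fin n → ℝ := fun i => (v i : ℝ)

/-- `B` is strictly copositive: `xᵀBx > 0` for all nonzero nonnegative `x`. -/
def StrictlyCopositive {n : ℕ} (B : Matrix (Fin n) (Fin n) ℝ) : Prop :=
  ∀ x : Fin n → ℝ, (∀ i, 0 ≤ x i) → x ≠ 0 → 0 < qf B x

/-- The copositive minimum: infimum of `vᵀBv` over nonzero nonnegative integer vectors. -/
noncomputable def copoMin {n : ℕ} (B : Matrix (Fin n) (Fin n) ℝ) : ℝ :=
  sInf {r : ℝ | ∃ v : Fin n → ℤ, (∀ i, 0 ≤ v i) ∧ v ≠ 0 ∧ r = qf B (intCast v)}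

/-- The set of nonzero nonnegative integer vectors attaining the copositive minimum. -/
def MinCOP {n : ℕ} (B : Matrix (Fin n) (Fin n) ℝ) : Set (Fin n → ℤ) :=
  {v | (∀ i, 0 ≤ v i) ∧ v ≠ 0 ∧ qf B (intCast v) = copoMin B}

/-- `B` is perfect copositive: strictly copositive and uniquely determined among
symmetric matrices by the equations `vᵀQv = copoMin B` for `v ∈ MinCOP B`. -/
def IsPerfectCopositive {n : ℕ} (B : Matrix (Fin n) (Fin n) ℝ) : Prop :=
  B.IsSymm ∧ StrictlyCopositive B ∧
    ∀ Q : Matrix (Fin n) (Fin n) ℝ, Q.IsSymm →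
      (∀ v ∈ MinCOP B, qf Q (intCast v) = copoMin B) → Q = B

/-- The copositive Ryshkov polyhedron. -/
def RCOP (n : ℕ) : Set (Matrix (Fin n) (Fin n) ℝ) :=
  {B | B.IsSymm ∧ ∀ v : Fin n → ℤ, (∀ i, 0 ≤ v i) → v ≠ 0 → 1 ≤ qf B (intCast v)}

lemma intCast_zero {n : ℕ} : intCast (0 : Fin n → ℤ) = 0 := by
  funext i; simp [intCast]

lemma qf_add {n : ℕ} (A B : Matrix (Fin n) (Fin n) ℝ) (x : Fin n → ℝ) :
    qf (A + B) x = qf A x + qf B x := by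
  simp [qf, Matrix.add_mulVec, dotProduct_add]

lemma qf_smul {n : ℕ} (c : ℝ) (B : Matrix (Fin n) (Fin n) ℝ) (x : Fin n → ℝ) :
    qf (c • B) x = c * qf B x := by
  simp [qf, Matrix.smul_mulVec, dotProduct_smul]

lemma qf_smul_vec {n : ℕ} (c : ℝ) (B : Matrix (Fin n) (Fin n) ℝ) (x : Fin n → ℝ) :
    qf B (c • x) = c^2 * qf B x := by
  simp [qf, Matrix.mulVec_smul, smul_dotProduct, dotProduct_smul]
  ring

lemma qf_cont {n : ℕ} (B : Matrix (Fin n) (Fin n) ℝ) : Continuous (qf B) := by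
  unfold qf dotProduct Matrix.mulVec dotProduct
  fun_prop

lemma one_mem_RCOP {n : ℕ} : (1 : Matrix (Fin n) (Fin n) ℝ) ∈ RCOP n := by
  refine ⟨Matrix.isSymm_one, fun v hv hne => ?_⟩
  have : qf 1 (intCast v) = ∑ i, ((v i : ℝ))^2 := by
    simp [qf, intCast, Matrix.mulVec_one, dotProduct]
    exact Finset.sum_congr rfl (fun i _ => (sq ((v i : ℝ))).symm)
  rw [this]
  obtain ⟨i, hi⟩ := Function.ne_iff.mp hne
  have h1 : (1 : ℤ) ≤ v i := lt_of_le_of_ne (hv i) (Ne.symm hi)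
  have h1' : (1 : ℝ) ≤ (v i : ℝ) := by exact_mod_cast h1
  calc (1:ℝ) ≤ ((v i : ℝ))^2 := by nlinarith
    _ ≤ ∑ i, ((v i : ℝ))^2 := Finset.single_le_sum (f := fun i => ((v i : ℝ))^2)
        (fun j _ => sq_nonneg _) (Finset.mem_univ i)

theorem recession_cone_RCOP {n : ℕ} (R : Matrix (Fin n) (Fin n) ℝ) (hR : R.IsSymm) :
    (∀ Q ∈ RCOP n, ∀ l : ℝ, 0 ≤ l → Q + l • R ∈ RCOP n) ↔
      (∀ x : Fin n → ℝ, (∀ i, 0 ≤ x i) → 0 ≤ qf R x) := by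
  constructor
  · intro h x hx
    -- Step 1: nonneg on integer vectors
    have hint : ∀ v : Fin n → ℤ, (∀ i, 0 ≤ v i) → 0 ≤ qf R (intCast v) := by
      intro v hv
      by_cases hne : v = 0
      · subst hne; simp [qf, intCast_zero]
      by_contra hneg
      push_neg at hneg
      set c := qf R (intCast v) with hc
      set a := qf 1 (intCast v) with ha
      have hl : (0:ℝ) ≤ a / (-c) := by
        have ha1 : (1:ℝ) ≤ a := one_mem_RCOP.2 v hv hne
        exact div_nonneg (by linarith) (by linarith)
      have := (h 1 one_mem_RCOP (a / (-c)) hl).2 v hv hne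
      rw [qf_add, qf_smul] at this
      have hcne : c ≠ 0 := ne_of_lt hneg
      rw [div_mul_eq_mul_div, ← hc, ← ha] at this
      have : (1:ℝ) ≤ a + a * c / (-c) := this
      rw [mul_div_assoc, div_neg, div_self hcne] at this
      simp at this
      linarith
    -- Step 2: approximate real x by rational scalings of integer vectors
    set seq : ℕ → (Fin n → ℝ) := fun k =>
      ((k+1 : ℝ)⁻¹) • intCast (fun i => ⌈(k+1 : ℝ) * x i⌉) with hseq
    have hseqnn : ∀ k, 0 ≤ qf R (seq k) := by
      intro k
      rw [hseq]
      simp only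
      rw [qf_smul_vec]
      set v : Fin n → ℤ := fun i => ⌈(k+1 : ℝ) * x i⌉ with hv
      have hvnn : ∀ i, 0 ≤ v i := by
        intro i
        rw [hv]
        exact Int.ceil_nonneg (mul_nonneg (by positivity) (hx i))
      have hq := hint v hvnn
      have hk2 : (0:ℝ) ≤ (k+1:ℝ)⁻¹^2 := by positivity
      exact mul_nonneg hk2 hq
    have hlim : Filter.Tendsto seq Filter.atTop (nhds x) := by
      rw [tendsto_pi_nhds]
      intro i
      have hle : ∀ k : ℕ, x i ≤ seq k i := by
        intro k
        have : (k+1:ℝ) * x i ≤ ⌈(k+1 : ℝ) * x i⌉ := Int.le_ceil _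
        have hk : (0:ℝ) < k+1 := by positivity
        rw [hseq]
        simp only [Pi.smul_apply, intCast, smul_eq_mul]
        rw [inv_mul_eq_div, le_div_iff₀ hk]
        linarith
      have hge : ∀ k : ℕ, seq k i ≤ x i + (k+1:ℝ)⁻¹ := by
        intro k
        have : (⌈(k+1 : ℝ) * x i⌉ : ℝ) < (k+1:ℝ) * x i + 1 := Int.ceil_lt_add_one _
        have hk : (0:ℝ) < k+1 := by positivity
        rw [hseq]
        simp only [Pi.smul_apply, intCast, smul_eq_mul]
        rw [inv_mul_eq_div, div_le_iff₀ hk]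
        have key : (k+1:ℝ)⁻¹ * (k+1) = 1 := inv_mul_cancel₀ hk.ne'
        nlinarith [key, this]
      have h1 : Filter.Tendsto (fun k : ℕ => x i + (k+1:ℝ)⁻¹) Filter.atTop (nhds (x i)) := by
        have := tendsto_one_div_add_atTop_nhds_zero_nat (𝕜 := ℝ)
        have h2 : Filter.Tendsto (fun k : ℕ => x i + 1 / (k+1:ℝ)) Filter.atTop
            (nhds (x i + 0)) := Filter.Tendsto.const_add _ this
        simpa [one_div] using h2
      exact tendsto_of_tendsto_of_tendsto_of_le_of_le tendsto_const_nhds h1 hle hge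
    have : Filter.Tendsto (fun k => qf R (seq k)) Filter.atTop (nhds (qf R x)) :=
      ((qf_cont R).tendsto x).comp hlim
    exact ge_of_tendsto this (Filter.Eventually.of_forall hseqnn)
  · intro h Q hQ l hl
    refine ⟨?_, fun v hv hne => ?_⟩
    · unfold Matrix.IsSymm at *
      rw [Matrix.transpose_add, Matrix.transpose_smul, hQ.1, hR]
    · have h1 := hQ.2 v hv hne
      have h2 : 0 ≤ qf R (intCast v) := h (intCast v) (fun i => by
        simp [intCast]; exact_mod_cast hv i)
      rw [qf_add, qf_smul]
      nlinarith
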